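/- (Proposition 2.1, pathwise inequality (eq.down1).) Let ε ∈ (0,a) and q, s ≥ 0. If T_{x−a}^- < ∞ and T_{x−a}^- < T_{x+ε}^+, then τ_a ≤ T_{x−a}^- (in particular τ_a < ∞), M(τ_a) ≤ x + ε, Y(τ_a) ≤ x + ε − f(T_{x−a}^-), and consequently e^{−q τ_a − s(Y(τ_a) − a)} ≥ e^{−q T_{x−a}^- − s(x − a − f(T_{x−a}^-)) − sε}. -/

import Mathlib

open Filter Set
open scoped NNReal ENNReal Topology

noncomputable section

/-- The first time `t ∈ [0,∞)` at which the predicate `P` holds, valued in `[0,∞]`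
(with the convention `inf ∅ = ∞`). -/
def hitTime (P : ℝ≥0 → Prop) : ℝ≥0∞ :=
  sInf ((fun t : ℝ≥0 => (t : ℝ≥0∞)) '' {t | P t})

/-- The first passage time of `f` above the level `y`. -/
def Tplus (f : ℝ≥0 → ℝ) (y : ℝ) : ℝ≥0∞ := hitTime (fun t => y < f t)

/-- The first passage time of `f` below the level `y`. -/
def Tminus (f : ℝ≥0 → ℝ) (y : ℝ) : ℝ≥0∞ := hitTime (fun t => f t < y)

/-- The running maximum `M(t) = sup_{0 ≤ s ≤ t} f(s)`. -/
def runMax (f : ℝ≥0 → ℝ) (t : ℝ≥0) : ℝ := sSup (f '' Set.Iic t)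

/-- The drawdown `Y(t) = M(t) − f(t)`. -/
def drawdown (f : ℝ≥0 → ℝ) (t : ℝ≥0) : ℝ := runMax f t - f t

/-- The first time the drawdown exceeds `a`. -/
def tauD (f : ℝ≥0 → ℝ) (a : ℝ) : ℝ≥0∞ := hitTime (fun t => a < drawdown f t)

/-- Evaluation point of a finite `[0,∞]`-valued time. -/
def ev (T : ℝ≥0∞) : ℝ≥0 := T.toNNReal

end

lemma hitTime_le {P : ℝ≥0 → Prop} {t : ℝ≥0} (h : P t) : hitTime P ≤ t :=
  sInf_le ⟨t, h, rfl⟩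

lemma hitTime_mono {P Q : ℝ≥0 → Prop} (h : ∀ t, P t → Q t) : hitTime Q ≤ hitTime P :=
  sInf_le_sInf (Set.image_mono fun t ht => h t ht)

lemma not_of_lt_evHit {P : ℝ≥0 → Prop} {t : ℝ≥0}
    (ht : t < (hitTime P).toNNReal) : ¬ P t := by
  intro hP
  have h1 : hitTime P ≤ t := hitTime_le hP
  have := ENNReal.toNNReal_mono ENNReal.coe_ne_top h1
  simp at this
  exact absurd ht (not_lt.2 this)

lemma bddAbove_image_Iic {f : ℝ≥0 → ℝ} (hbdd : ∀ b : ℝ≥0, ∃ C : ℝ, ∀ t ≤ b, |f t| ≤ C)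
    (t : ℝ≥0) : BddAbove (f '' Set.Iic t) := by
  obtain ⟨C, hC⟩ := hbdd t
  exact ⟨C, by rintro v ⟨u, hu, rfl⟩; exact (abs_le.1 (hC u hu)).2⟩

lemma le_runMax {f : ℝ≥0 → ℝ} (hbdd : ∀ b : ℝ≥0, ∃ C : ℝ, ∀ t ≤ b, |f t| ≤ C)
    {u t : ℝ≥0} (h : u ≤ t) : f u ≤ runMax f t :=
  le_csSup (bddAbove_image_Iic hbdd t) ⟨u, h, rfl⟩

lemma runMax_mono {f : ℝ≥0 → ℝ} (hbdd : ∀ b : ℝ≥0, ∃ C : ℝ, ∀ t ≤ b, |f t| ≤ C)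
    {u t : ℝ≥0} (h : u ≤ t) : runMax f u ≤ runMax f t :=
  csSup_le_csSup (bddAbove_image_Iic hbdd t) ⟨f 0, 0, by simp, rfl⟩
    (Set.image_mono (Set.Iic_subset_Iic.2 h))

/-- Right-continuity forces `f ≤ y` at the (finite) hitting time of `{f < y}`. -/
lemma f_evTminus_le {f : ℝ≥0 → ℝ} {y : ℝ}
    (hrc : ∀ t : ℝ≥0, ContinuousWithinAt f (Set.Ici t) t)
    (hfin : Tminus f y ≠ ⊤) : f (ev (Tminus f y)) ≤ y := by
  set T := Tminus f y with hT
  set T' := ev T with hT'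
  have hTT' : T = (T' : ℝ≥0∞) := (ENNReal.coe_toNNReal hfin).symm
  by_contra hgt
  push_neg at hgt
  have hev : ∀ᶠ u in 𝓝[Set.Ici T'] T', y < f u :=
    (hrc T').eventually (eventually_gt_nhds hgt)
  rw [Filter.Eventually, Metric.mem_nhdsWithin_iff] at hev
  obtain ⟨δ, hδ, hball⟩ := hev
  obtain ⟨δ', hδ'pos, hδ'lt⟩ := exists_between hδ
  set d : ℝ≥0 := ⟨δ', hδ'pos.le⟩ with hd
  have hle : (↑(T' + d) : ℝ≥0∞) ≤ T := by
    apply le_sInf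
    rintro b ⟨t, ht, rfl⟩
    simp only [Set.mem_setOf_eq] at ht
    have h1 : T ≤ (t : ℝ≥0∞) := hitTime_le ht
    rw [hTT', ENNReal.coe_le_coe] at h1
    rw [ENNReal.coe_le_coe]
    by_contra hlt
    push_neg at hlt
    have hdist : dist t T' < δ := by
      rw [NNReal.dist_eq]
      have h2 : (t : ℝ) < ((T' + d : ℝ≥0) : ℝ) := NNReal.coe_lt_coe.2 hlt
      have h2' : (t : ℝ) < (T' : ℝ) + δ' := by rw [NNReal.coe_add] at h2; exact h2
      have h3 : (T' : ℝ) ≤ t := h1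
      rw [abs_of_nonneg (by linarith)]
      linarith
    exact absurd (hball ⟨hdist, h1⟩) (not_lt.2 ht.le)
  rw [hTT', ENNReal.coe_le_coe] at hle
  have hd0 : d ≤ 0 := by
    by_contra h
    push_neg at h
    exact absurd hle (not_le.2 (lt_add_of_pos_right T' h))
  exact absurd hd0 (not_le.2 (by simp [hd]; exact hδ'pos))

/-- **Proposition 2.1, pathwise inequality (eq.down1).**
If `T_{x−a}^- < ∞` and `T_{x−a}^- < T_{x+ε}^+`, then `τ_a ≤ T_{x−a}^-` (in particular
`τ_a < ∞`), `M(τ_a) ≤ x + ε`, `Y(τ_a) ≤ x + ε − f(T_{x−a}^-)`, and consequently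
`e^{−q τ_a − s(Y(τ_a) − a)} ≥ e^{−q T_{x−a}^- − s(x − a − f(T_{x−a}^-)) − sε}`. -/
theorem eq_down1 (x a : ℝ) (ha : 0 < a) (f : ℝ≥0 → ℝ)
    (hrc : ∀ t : ℝ≥0, ContinuousWithinAt f (Set.Ici t) t)
    (hbdd : ∀ b : ℝ≥0, ∃ C : ℝ, ∀ t ≤ b, |f t| ≤ C)
    (hf0 : f 0 = x) (ε q s : ℝ) (hε : 0 < ε) (hεa : ε < a) (hq : 0 ≤ q) (hs : 0 ≤ s)
    (hTfin : Tminus f (x - a) ≠ ⊤)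
    (hTlt : Tminus f (x - a) < Tplus f (x + ε)) :
    tauD f a ≤ Tminus f (x - a) ∧ tauD f a ≠ ⊤ ∧
    runMax f (ev (tauD f a)) ≤ x + ε ∧
    drawdown f (ev (tauD f a)) ≤ x + ε - f (ev (Tminus f (x - a))) ∧
    Real.exp (-q * ((ev (Tminus f (x - a)) : ℝ))
        - s * (x - a - f (ev (Tminus f (x - a)))) - s * ε) ≤
      Real.exp (-q * ((ev (tauD f a) : ℝ)) - s * (drawdown f (ev (tauD f a)) - a)) := by
  set T := Tminus f (x - a) with hTdef
  set T' := ev T with hT'def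
  -- Claim 1: tauD ≤ T
  have hτT : tauD f a ≤ T := by
    apply hitTime_mono
    intro t ht
    have hM : x ≤ runMax f t := hf0 ▸ le_runMax hbdd (zero_le (a := t))
    have : drawdown f t = runMax f t - f t := rfl
    rw [this]
    linarith
  have hτfin : tauD f a ≠ ⊤ := fun h => hTfin (top_le_iff.1 (h ▸ hτT))
  set τ' := ev (tauD f a) with hτ'def
  have hτ'T' : τ' ≤ T' := ENNReal.toNNReal_mono hTfin hτT
  -- f T' ≤ x - a
  have hfT' : f T' ≤ x - a := f_evTminus_le hrc hTfin
  -- Claim 3: runMax f T' ≤ x + ε (hence also for τ')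
  have hMT' : runMax f T' ≤ x + ε := by
    refine csSup_le ⟨f 0, ⟨0, by simp, rfl⟩⟩ ?_
    rintro v ⟨u, hu, rfl⟩
    by_contra hv
    push_neg at hv
    have h1 : Tplus f (x + ε) ≤ u := hitTime_le hv
    have h2 : (u : ℝ≥0∞) ≤ T := by
      calc (u : ℝ≥0∞) ≤ (T' : ℝ≥0∞) := ENNReal.coe_le_coe.2 hu
        _ = T := ENNReal.coe_toNNReal hTfin
    exact absurd (h1.trans h2) (not_le.2 hTlt)
  have hMτ' : runMax f τ' ≤ x + ε := (runMax_mono hbdd hτ'T').trans hMT'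
  -- f τ' ≥ f T'
  have hfτ' : f T' ≤ f τ' := by
    rcases eq_or_lt_of_le hτ'T' with h | h
    · rw [h]
    · have : ¬ f τ' < x - a := not_of_lt_evHit h
      push_neg at this
      linarith
  -- Claim 4
  have hY : drawdown f τ' ≤ x + ε - f T' := by
    have : drawdown f τ' = runMax f τ' - f τ' := rfl
    rw [this]; linarith
  refine ⟨hτT, hτfin, hMτ', hY, ?_⟩
  apply Real.exp_le_exp.2
  have hqτ : q * (τ' : ℝ) ≤ q * (T' : ℝ) :=
    mul_le_mul_of_nonneg_left (NNReal.coe_le_coe.2 hτ'T') hq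
  have hsY : s * drawdown f τ' ≤ s * (x + ε - f T') :=
    mul_le_mul_of_nonneg_left hY hs
  nlinarith [hsY, hqτ]
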